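/- arXiv:1212.5929 — 5 statements merged into one kernel-verified Lean document; each statement's English description precedes it below -/
import Mathlib

section
/- Let 0 < m < 1 < M and let s, y ∈ ℝⁿ with s ≠ 0. Let γ be given by the selection rule (20). Then γ ∈ [0, 1], and the vector z = γ s + (1 − γ) y satisfies both curvature conditions: zᵀs ≥ m sᵀs and zᵀz ≤ M zᵀs. -/
open RealInnerProductSpace

/-- `γ̌ = (m sᵀs − yᵀs)/(sᵀs − yᵀs)`. -/
noncomputable def gammaCheck {n : ℕ} (m : ℝ) (s y : EuclideanSpace ℝ (Fin n)) : ℝ :=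
  (m * ⟪s, s⟫ - ⟪y, s⟫) / (⟪s, s⟫ - ⟪y, s⟫)

/-- `γ̲`, the smaller root of
`p(γ) = γ²(s−y)ᵀ(s−y) + γ(s−y)ᵀ(2y − Ms) + yᵀ(y − Ms)` (for `s ≠ y`), given by the
explicit formula (17) of the paper. -/
noncomputable def gammaLower {n : ℕ} (M : ℝ) (s y : EuclideanSpace ℝ (Fin n)) : ℝ :=
  (⟪s - y, M • s - (2 : ℝ) • y⟫ -
      Real.sqrt (M ^ 2 * ⟪s, s - y⟫ ^ 2 +
        4 * (M - 1) * (⟪s, s⟫ * ⟪y, y⟫ - ⟪y, s⟫ ^ 2))) /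
    (2 * ⟪s - y, s - y⟫)

open Classical in
/-- The selection rule (20): `γ = max{γ̲, γ̌}` if `m sᵀs > yᵀs`;
`γ = max{0, γ̲}` if `m sᵀs ≤ yᵀs` and `s ≠ y`; `γ = 0` if `s = y`. -/
noncomputable def selectGamma {n : ℕ} (m M : ℝ) (s y : EuclideanSpace ℝ (Fin n)) : ℝ :=
  if s = y then 0
  else if ⟪y, s⟫ < m * ⟪s, s⟫ then max (gammaLower M s y) (gammaCheck m s y)
  else max 0 (gammaLower M s y)

/-!
Write `z = y + γ (s - y)`. Then `zᵀs` is affine in `γ`, and `zᵀz - M zᵀs = p(γ)` is a quadratic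
with leading coefficient `|s - y|² > 0` and `p(1) = (1 - M) sᵀs ≤ 0`. Hence `γ̲ ≤ 1` and `p ≤ 0`
on `[γ̲, 1]`, which gives the second condition for any `γ ≥ γ̲` in `[0, 1]`. The first condition
holds on `[γ̌, 1]` when `m sᵀs > yᵀs`, and on all of `[0, 1]` otherwise, since then `zᵀs` is a
convex combination of `sᵀs` and `yᵀs`, both at least `m sᵀs`.
-/

noncomputable def smallerRoot (a b c : ℝ) : ℝ :=
  (-b - √(discrim a b c)) / (2 * a)

section Quadratic

variable {a b c t u : ℝ}

lemma sq_two_mul_mul_add_le_discrim (ha : 0 ≤ a) (hu : a * (u * u) + b * u + c ≤ 0) :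
    (2 * a * u + b) ^ 2 ≤ discrim a b c := by
  rw [discrim]; nlinarith

lemma abs_two_mul_mul_add_le_sqrt_discrim (ha : 0 ≤ a) (hu : a * (u * u) + b * u + c ≤ 0) :
    |2 * a * u + b| ≤ √(discrim a b c) :=
  Real.abs_le_sqrt (sq_two_mul_mul_add_le_discrim ha hu)

lemma smallerRoot_le (ha : 0 < a) (hu : a * (u * u) + b * u + c ≤ 0) :
    smallerRoot a b c ≤ u := by
  have := abs_two_mul_mul_add_le_sqrt_discrim ha.le hu
  rw [smallerRoot, div_le_iff₀ (by positivity)]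
  linarith [neg_abs_le (2 * a * u + b)]

lemma quadratic_nonpos_of_smallerRoot_le (ha : 0 < a) (hu : a * (u * u) + b * u + c ≤ 0)
    (ht : smallerRoot a b c ≤ t) (htu : t ≤ u) : a * (t * t) + b * t + c ≤ 0 := by
  -- `4a p(t) = (2at + b)² - discrim`, and `2at + b` is squeezed between its value
  -- `-√discrim` at the smaller root and its value `2au + b ≤ √discrim` at `u`.
  have hsqrt := abs_two_mul_mul_add_le_sqrt_discrim ha.le hu
  rw [smallerRoot, div_le_iff₀ (by positivity)] at ht
  have hlower : -√(discrim a b c) ≤ 2 * a * t + b := by linarith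
  have hupper : 2 * a * t + b ≤ √(discrim a b c) := by
    nlinarith [le_abs_self (2 * a * u + b)]
  have hdiscrim := (sq_nonneg _).trans (sq_two_mul_mul_add_le_discrim ha.le hu)
  have hsq := sq_le_sq' hlower hupper
  rw [Real.sq_sqrt hdiscrim, discrim] at hsq
  nlinarith

end Quadratic

section InnerProduct

variable {E : Type*} [NormedAddCommGroup E] [InnerProductSpace ℝ E]

lemma inner_convexComb_left (γ : ℝ) (s y : E) :
    ⟪γ • s + (1 - γ) • y, s⟫ = γ * ⟪s, s⟫ + (1 - γ) * ⟪y, s⟫ := by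
  simp only [inner_add_left, real_inner_smul_left]

/-- With `z = y + γ (s - y)`, `zᵀz - M zᵀs` is the paper's quadratic `p(γ)`. -/
lemma inner_convexComb_sub_mul_inner (M γ : ℝ) (s y : E) :
    ⟪γ • s + (1 - γ) • y, γ • s + (1 - γ) • y⟫ - M * ⟪γ • s + (1 - γ) • y, s⟫ =
      ⟪s - y, s - y⟫ * (γ * γ) + ⟪s - y, (2 : ℝ) • y - M • s⟫ * γ + ⟪y, y - M • s⟫ := by
  have hys : ⟪s, y⟫ = ⟪y, s⟫ := real_inner_comm y s
  simp only [inner_add_left, inner_add_right, inner_sub_left, inner_sub_right,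
    real_inner_smul_left, real_inner_smul_right, hys]
  ring

lemma discrim_curvature (M : ℝ) (s y : E) :
    discrim ⟪s - y, s - y⟫ ⟪s - y, (2 : ℝ) • y - M • s⟫ ⟪y, y - M • s⟫ =
      M ^ 2 * ⟪s, s - y⟫ ^ 2 + 4 * (M - 1) * (⟪s, s⟫ * ⟪y, y⟫ - ⟪y, s⟫ ^ 2) := by
  have hys : ⟪s, y⟫ = ⟪y, s⟫ := real_inner_comm y s
  simp only [discrim, inner_sub_left, inner_sub_right, real_inner_smul_right, hys]
  ring

lemma curvature_quadratic_one_nonpos {M : ℝ} (hM : 1 ≤ M) (s y : E) :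
    ⟪s - y, s - y⟫ * (1 * 1) + ⟪s - y, (2 : ℝ) • y - M • s⟫ * 1 + ⟪y, y - M • s⟫ ≤ 0 := by
  rw [← inner_convexComb_sub_mul_inner]
  simp only [one_smul, sub_self, zero_smul, add_zero]
  nlinarith [real_inner_self_nonneg (x := s)]

end InnerProduct

section Selection

variable {n : ℕ} {m M : ℝ} {s y : EuclideanSpace ℝ (Fin n)}

lemma gammaLower_eq_smallerRoot (M : ℝ) (s y : EuclideanSpace ℝ (Fin n)) :
    gammaLower M s y =
      smallerRoot ⟪s - y, s - y⟫ ⟪s - y, (2 : ℝ) • y - M • s⟫ ⟪y, y - M • s⟫ := by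
  rw [gammaLower, smallerRoot, discrim_curvature, ← inner_neg_right, neg_sub]

lemma gammaLower_le_one (hM : 1 ≤ M) (hsy : s ≠ y) : gammaLower M s y ≤ 1 := by
  rw [gammaLower_eq_smallerRoot]
  exact smallerRoot_le (real_inner_self_pos.2 (sub_ne_zero.2 hsy))
    (curvature_quadratic_one_nonpos hM s y)

lemma gammaCheck_mem_Icc (hm : m ≤ 1) (h : ⟪y, s⟫ < m * ⟪s, s⟫) :
    gammaCheck m s y ∈ Set.Icc 0 1 := by
  have hs : 0 ≤ ⟪s, s⟫ := real_inner_self_nonneg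
  have hpos : 0 < ⟪s, s⟫ - ⟪y, s⟫ := by nlinarith
  rw [gammaCheck, Set.mem_Icc, div_le_one hpos]
  exact ⟨div_nonneg (by linarith) hpos.le, by nlinarith⟩

lemma selectGamma_mem_Icc (hm : m ≤ 1) (hM : 1 ≤ M) : selectGamma m M s y ∈ Set.Icc 0 1 := by
  rw [selectGamma]
  split_ifs with hsy h
  · simp
  · have hcheck := gammaCheck_mem_Icc hm h
    exact ⟨le_max_of_le_right hcheck.1, max_le (gammaLower_le_one hM hsy) hcheck.2⟩
  · exact ⟨le_max_left _ _, max_le zero_le_one (gammaLower_le_one hM hsy)⟩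

lemma gammaCheck_le_selectGamma (hm : m ≤ 1) (h : ⟪y, s⟫ < m * ⟪s, s⟫) :
    gammaCheck m s y ≤ selectGamma m M s y := by
  have hsy : s ≠ y := by
    rintro rfl
    nlinarith [real_inner_self_nonneg (x := s)]
  rw [selectGamma, if_neg hsy, if_pos h]
  exact le_max_right _ _

lemma gammaLower_le_selectGamma (hsy : s ≠ y) : gammaLower M s y ≤ selectGamma m M s y := by
  rw [selectGamma, if_neg hsy]
  split_ifs
  exacts [le_max_left _ _, le_max_right _ _]

lemma mul_inner_self_le_inner_convexComb {γ : ℝ} (hm : m ≤ 1) (hγ : γ ∈ Set.Icc 0 1)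
    (hcheck : ⟪y, s⟫ < m * ⟪s, s⟫ → gammaCheck m s y ≤ γ) :
    m * ⟪s, s⟫ ≤ ⟪γ • s + (1 - γ) • y, s⟫ := by
  have hs : 0 ≤ ⟪s, s⟫ := real_inner_self_nonneg
  rw [inner_convexComb_left]
  by_cases h : ⟪y, s⟫ < m * ⟪s, s⟫
  · have hpos : 0 < ⟪s, s⟫ - ⟪y, s⟫ := by nlinarith
    have := hcheck h
    rw [gammaCheck, div_le_iff₀ hpos] at this
    linarith
  · have hsm : 0 ≤ ⟪s, s⟫ - m * ⟪s, s⟫ := by nlinarith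
    nlinarith [mul_nonneg hγ.1 hsm, mul_nonneg (sub_nonneg.2 hγ.2) (sub_nonneg.2 (not_lt.1 h))]

lemma inner_self_le_mul_inner_convexComb {γ : ℝ} (hM : 1 ≤ M)
    (hlower : s ≠ y → gammaLower M s y ≤ γ) (hγ : γ ≤ 1) :
    ⟪γ • s + (1 - γ) • y, γ • s + (1 - γ) • y⟫ ≤ M * ⟪γ • s + (1 - γ) • y, s⟫ := by
  rw [← sub_nonpos, inner_convexComb_sub_mul_inner]
  by_cases hsy : s = y
  · subst hsy
    simpa using curvature_quadratic_one_nonpos hM s s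
  · refine quadratic_nonpos_of_smallerRoot_le (real_inner_self_pos.2 (sub_ne_zero.2 hsy))
      (curvature_quadratic_one_nonpos hM s y) ?_ hγ
    rw [← gammaLower_eq_smallerRoot]
    exact hlower hsy

end Selection

theorem stmt3_general {n : ℕ} (m M : ℝ) (hm1 : m < 1) (hM : 1 < M)
    (s y : EuclideanSpace ℝ (Fin n))
    (γ : ℝ) (hγ : γ = selectGamma m M s y)
    (z : EuclideanSpace ℝ (Fin n)) (hz : z = γ • s + (1 - γ) • y) :
    γ ∈ Set.Icc (0 : ℝ) 1 ∧ m * ⟪s, s⟫ ≤ ⟪z, s⟫ ∧ ⟪z, z⟫ ≤ M * ⟪z, s⟫ := by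
  subst hγ hz
  have hmem : selectGamma m M s y ∈ Set.Icc 0 1 := selectGamma_mem_Icc hm1.le hM.le
  exact ⟨hmem, mul_inner_self_le_inner_convexComb hm1.le hmem (gammaCheck_le_selectGamma hm1.le),
    inner_self_le_mul_inner_convexComb hM.le gammaLower_le_selectGamma hmem.2⟩

/-- **The selected `γ` lies in `[0,1]` and enforces both curvature conditions.**
Let `0 < m < 1 < M` and `s, y ∈ ℝⁿ` with `s ≠ 0`.  Let `γ` be given by the selection
rule (20).  Then `γ ∈ [0,1]`, and `z = γ s + (1 − γ) y` satisfies `zᵀs ≥ m sᵀs`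
and `zᵀz ≤ M zᵀs`. -/
theorem stmt3 {n : ℕ} (m M : ℝ) (hm0 : 0 < m) (hm1 : m < 1) (hM : 1 < M)
    (s y : EuclideanSpace ℝ (Fin n)) (hs : s ≠ 0)
    (γ : ℝ) (hγ : γ = selectGamma m M s y)
    (z : EuclideanSpace ℝ (Fin n)) (hz : z = γ • s + (1 - γ) • y) :
    γ ∈ Set.Icc (0 : ℝ) 1 ∧ m * ⟪s, s⟫ ≤ ⟪z, s⟫ ∧ ⟪z, z⟫ ≤ M * ⟪z, s⟫ :=
  stmt3_general m M hm1 hM s y γ hγ z hz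
end

section
/- Let s, y ∈ ℝⁿ with s ≠ 0, let 0 < m < 1, and define γ̌ = (m sᵀs − yᵀs)/(sᵀs − yᵀs) when sᵀs ≠ yᵀs. For γ ∈ [0,1] and z = γ s + (1 − γ) y, the condition zᵀs ≥ m sᵀs holds as follows: (i) if sᵀs > yᵀs, it holds if and only if γ ≥ max{γ̌, 0}; (ii) if sᵀs = yᵀs, it holds for every γ ∈ [0,1]; (iii) if sᵀs < yᵀs, then every γ ∈ [0,1] satisfies the condition and 1 ≤ γ̌. -/
open RealInnerProductSpace

/-- **Case analysis for the first curvature condition.**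
Let `s, y ∈ ℝⁿ` with `s ≠ 0`, `0 < m < 1`, and set `γ̌ = (m sᵀs − yᵀs)/(sᵀs − yᵀs)`
(when `sᵀs ≠ yᵀs`).  For `γ ∈ [0,1]` and `z = γ s + (1 − γ) y`, the condition
`zᵀs ≥ m sᵀs` holds precisely as follows:
(i) if `sᵀs > yᵀs`, it holds iff `γ ≥ max{γ̌, 0}`;
(ii) if `sᵀs = yᵀs`, it holds for every `γ ∈ [0,1]`;
(iii) if `sᵀs < yᵀs`, it holds for every `γ ∈ [0,1]`, and moreover `1 ≤ γ̌`. -/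
theorem stmt5 {n : ℕ} (s y : EuclideanSpace ℝ (Fin n)) (hs : s ≠ 0)
    (m : ℝ) (hm0 : 0 < m) (hm1 : m < 1)
    (γch : ℝ) (hγch : ⟪s, s⟫ ≠ ⟪y, s⟫ →
      γch = (m * ⟪s, s⟫ - ⟪y, s⟫) / (⟪s, s⟫ - ⟪y, s⟫)) :
    (⟪y, s⟫ < ⟪s, s⟫ →
      ∀ γ ∈ Set.Icc (0 : ℝ) 1,
        (m * ⟪s, s⟫ ≤ ⟪(γ • s + (1 - γ) • y : EuclideanSpace ℝ (Fin n)), s⟫ ↔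
          max γch 0 ≤ γ)) ∧
    (⟪s, s⟫ = ⟪y, s⟫ →
      ∀ γ ∈ Set.Icc (0 : ℝ) 1,
        m * ⟪s, s⟫ ≤ ⟪(γ • s + (1 - γ) • y : EuclideanSpace ℝ (Fin n)), s⟫) ∧
    (⟪s, s⟫ < ⟪y, s⟫ →
      (∀ γ ∈ Set.Icc (0 : ℝ) 1,
        m * ⟪s, s⟫ ≤ ⟪(γ • s + (1 - γ) • y : EuclideanSpace ℝ (Fin n)), s⟫) ∧
      1 ≤ γch) := by

  have ha : (0:ℝ) < ⟪s, s⟫ := by rw [real_inner_self_eq_norm_sq]; exact pow_pos (norm_pos_iff.mpr hs) 2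
  set a := (⟪s, s⟫ : ℝ) with hadef
  set b := (⟪y, s⟫ : ℝ) with hbdef
  have hz : ∀ γ : ℝ, ⟪(γ • s + (1 - γ) • y : EuclideanSpace ℝ (Fin n)), s⟫ = γ * a + (1 - γ) * b := by
    intro γ
    simp [inner_add_left, real_inner_smul_left, hadef, hbdef, Finset.mul_sum, mul_assoc]
  refine ⟨?_, ?_, ?_⟩
  · intro hba γ hγ
    have hne : a ≠ b := ne_of_gt hba
    have hch := hγch hne
    rw [hz]
    have hab : 0 < a - b := by linarith
    constructor
    · intro h
      have : γch ≤ γ := by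
        rw [hch, div_le_iff₀ hab]
        nlinarith
      exact max_le this hγ.1
    · intro h
      have h1 : γch ≤ γ := le_trans (le_max_left _ _) h
      rw [hch, div_le_iff₀ hab] at h1
      nlinarith
  · intro hab γ hγ
    rw [hz, ← hab]
    nlinarith [hγ.1, hγ.2]
  · intro hab
    have hne : a ≠ b := ne_of_lt hab
    have hch := hγch hne
    have hba : b - a > 0 := by linarith
    constructor
    · intro γ hγ
      rw [hz]
      nlinarith [hγ.1, hγ.2]
    · rw [hch]
      rw [show (m * a - b) / (a - b) = (b - m * a) / (b - a) by rw [div_eq_div_iff (by linarith) (by linarith)]; ring]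
      rw [le_div_iff₀ hba]
      nlinarith
end

section
/- Let s, y ∈ ℝⁿ with s ≠ 0, s ≠ y, and let M > 1. Then the quadratic p(γ) = γ²(s−y)ᵀ(s−y) + γ(s−y)ᵀ(2y − Ms) + yᵀ(y − Ms) is strictly convex, the equation p(γ) = 0 has exactly two real solutions γ̲ < 1 < γ̄, p(γ) ≤ 0 for every γ ∈ [γ̲, γ̄], and the smaller root is given explicitly by γ̲ = [ (s−y)ᵀ(Ms − 2y) − √( M²(sᵀ(s−y))² + 4(M−1)(sᵀs · yᵀy − (yᵀs)²) ) ] / (2 (s−y)ᵀ(s−y)). -/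
/-!
Since `z = γ s + (1 - γ) y` runs through `s` at `γ = 1`, the quadratic takes the value
`(1 - M) ‖s‖² < 0` there, while its leading coefficient `‖s - y‖²` is positive.
An upward parabola that is negative somewhere has positive discriminant, two real roots
on either side of that point, and is nonpositive between them; the explicit form of the
smaller root is the quadratic formula after expanding the discriminant in inner products.
-/

open RealInnerProductSpace Set

section Quadratic

variable {a b c : ℝ}

noncomputable def lowerRoot (a b c : ℝ) : ℝ := (-b - √(discrim a b c)) / (2 * a)

noncomputable def upperRoot (a b c : ℝ) : ℝ := (-b + √(discrim a b c)) / (2 * a)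

theorem discrim_pos_of_quadratic_neg (ha : 0 < a) {x : ℝ} (hx : a * x ^ 2 + b * x + c < 0) :
    0 < discrim a b c := by
  rw [discrim]
  nlinarith [sq_nonneg (2 * a * x + b)]

theorem quadratic_eq_mul_sub_lowerRoot_mul_sub_upperRoot (ha : a ≠ 0)
    (hd : 0 ≤ discrim a b c) (x : ℝ) :
    a * x ^ 2 + b * x + c = a * (x - lowerRoot a b c) * (x - upperRoot a b c) := by
  have hsq : √(discrim a b c) ^ 2 = b ^ 2 - 4 * a * c := Real.sq_sqrt hd
  rw [lowerRoot, upperRoot]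
  field_simp
  linear_combination hsq

theorem lowerRoot_lt_upperRoot (ha : 0 < a) (hd : 0 < discrim a b c) :
    lowerRoot a b c < upperRoot a b c :=
  div_lt_div_of_pos_right (by linarith [Real.sqrt_pos.2 hd]) (by positivity)

theorem strictConvexOn_quadratic (ha : 0 < a) :
    StrictConvexOn ℝ univ fun x : ℝ ↦ a * x ^ 2 + b * x + c := by
  refine ⟨convex_univ, fun x _ z _ hxz t u ht hu htu ↦ ?_⟩
  obtain rfl : u = 1 - t := by linarith
  have hgap : 0 < a * t * (1 - t) * (x - z) ^ 2 := by
    have := sub_ne_zero.2 hxz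
    positivity
  simp only [smul_eq_mul]
  linear_combination hgap

variable {q : ℝ → ℝ} (ha : 0 < a) (hq : ∀ x, q x = a * x ^ 2 + b * x + c)
  {x₀ : ℝ} (hx₀ : q x₀ < 0)
include ha hq hx₀

theorem eq_mul_sub_lowerRoot_mul_sub_upperRoot_of_neg (x : ℝ) :
    q x = a * (x - lowerRoot a b c) * (x - upperRoot a b c) := by
  rw [hq] at hx₀ ⊢
  exact quadratic_eq_mul_sub_lowerRoot_mul_sub_upperRoot ha.ne'
    (discrim_pos_of_quadratic_neg ha hx₀).le x

theorem mem_Ioo_lowerRoot_upperRoot_of_neg : x₀ ∈ Ioo (lowerRoot a b c) (upperRoot a b c) := by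
  have hlu := lowerRoot_lt_upperRoot ha (discrim_pos_of_quadratic_neg ha ((hq x₀) ▸ hx₀))
  have hfac := eq_mul_sub_lowerRoot_mul_sub_upperRoot_of_neg ha hq hx₀ x₀
  rw [hfac] at hx₀
  constructor <;> by_contra! h
  · nlinarith [mul_nonneg ha.le (mul_nonneg_of_nonpos_of_nonpos (sub_nonpos.2 h)
      (sub_nonpos.2 (h.trans hlu.le)))]
  · nlinarith [mul_nonneg ha.le (mul_nonneg (sub_nonneg.2 (hlu.le.trans h)) (sub_nonneg.2 h))]

theorem eq_zero_iff_eq_lowerRoot_or_eq_upperRoot_of_neg (x : ℝ) :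
    q x = 0 ↔ x = lowerRoot a b c ∨ x = upperRoot a b c := by
  rw [eq_mul_sub_lowerRoot_mul_sub_upperRoot_of_neg ha hq hx₀, mul_assoc,
    mul_eq_zero, mul_eq_zero, sub_eq_zero, sub_eq_zero]
  simp only [ha.ne', false_or]

theorem nonpos_of_mem_Icc_lowerRoot_upperRoot {x : ℝ}
    (hx : x ∈ Icc (lowerRoot a b c) (upperRoot a b c)) : q x ≤ 0 := by
  rw [eq_mul_sub_lowerRoot_mul_sub_upperRoot_of_neg ha hq hx₀, mul_assoc]
  exact mul_nonpos_of_nonneg_of_nonpos ha.le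
    (mul_nonpos_of_nonneg_of_nonpos (sub_nonneg.2 hx.1) (sub_nonpos.2 hx.2))

end Quadratic

section InnerProduct

variable {E : Type*} [NormedAddCommGroup E] [InnerProductSpace ℝ E]

theorem inner_convexComb_sub_smul_inner (s y : E) (M γ : ℝ) :
    ⟪γ • s + (1 - γ) • y, γ • s + (1 - γ) • y⟫ - M * ⟪γ • s + (1 - γ) • y, s⟫ =
      γ ^ 2 * ⟪s - y, s - y⟫ + γ * ⟪s - y, (2 : ℝ) • y - M • s⟫ + ⟪y, y - M • s⟫ := by
  simp only [inner_add_left, inner_add_right, inner_sub_left, inner_sub_right,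
    real_inner_smul_left, real_inner_smul_right, real_inner_comm y s]
  ring

theorem discrim_inner_eq (s y : E) (M : ℝ) :
    discrim ⟪s - y, s - y⟫ ⟪s - y, (2 : ℝ) • y - M • s⟫ ⟪y, y - M • s⟫ =
      M ^ 2 * ⟪s, s - y⟫ ^ 2 + 4 * (M - 1) * (⟪s, s⟫ * ⟪y, y⟫ - ⟪y, s⟫ ^ 2) := by
  simp only [discrim, inner_sub_left, inner_sub_right, real_inner_smul_right, real_inner_comm y s]
  ring

end InnerProduct

/-- **Roots of the quadratic `p`.** Let `s, y ∈ ℝⁿ` with `s ≠ 0`, `s ≠ y`, and `M > 1`.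
Then `p(γ) = γ²(s−y)ᵀ(s−y) + γ(s−y)ᵀ(2y − Ms) + yᵀ(y − Ms)` is strictly convex,
`p(γ) = 0` has exactly two real solutions `γ̲ < 1 < γ̄`, `p(γ) ≤ 0` on `[γ̲, γ̄]`, and
`γ̲ = [(s−y)ᵀ(Ms − 2y) − √(M²(sᵀ(s−y))² + 4(M−1)(sᵀs·yᵀy − (yᵀs)²))] / (2(s−y)ᵀ(s−y))`. -/
theorem stmt8 {n : ℕ} (s y : EuclideanSpace ℝ (Fin n)) (hs : s ≠ 0) (hsy : s ≠ y)
    (M : ℝ) (hM : 1 < M) (p : ℝ → ℝ)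
    (hp : ∀ γ : ℝ, p γ =
      γ ^ 2 * ⟪s - y, s - y⟫ + γ * ⟪s - y, (2 : ℝ) • y - M • s⟫ + ⟪y, y - M • s⟫) :
    StrictConvexOn ℝ Set.univ p ∧
    ∃ γlow γhigh : ℝ, γlow < 1 ∧ 1 < γhigh ∧
      p γlow = 0 ∧ p γhigh = 0 ∧
      (∀ γ : ℝ, p γ = 0 → γ = γlow ∨ γ = γhigh) ∧
      (∀ γ ∈ Set.Icc γlow γhigh, p γ ≤ 0) ∧
      γlow = (⟪s - y, M • s - (2 : ℝ) • y⟫ -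
          Real.sqrt (M ^ 2 * ⟪s, s - y⟫ ^ 2 +
            4 * (M - 1) * (⟪s, s⟫ * ⟪y, y⟫ - ⟪y, s⟫ ^ 2))) /
        (2 * ⟪s - y, s - y⟫) := by
  set a := ⟪s - y, s - y⟫
  set b := ⟪s - y, (2 : ℝ) • y - M • s⟫
  set c := ⟪y, y - M • s⟫
  have ha : 0 < a := real_inner_self_pos.2 (sub_ne_zero.2 hsy)
  have hq : ∀ γ, p γ = a * γ ^ 2 + b * γ + c := fun γ ↦ by rw [hp]; ring
  have hp_one : p 1 < 0 := by
    have h := inner_convexComb_sub_smul_inner s y M 1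
    rw [sub_self, zero_smul, add_zero, one_smul, ← hp] at h
    nlinarith [real_inner_self_pos.2 hs]
  have hroots := eq_zero_iff_eq_lowerRoot_or_eq_upperRoot_of_neg ha hq hp_one
  obtain ⟨hlow, hhigh⟩ := mem_Ioo_lowerRoot_upperRoot_of_neg ha hq hp_one
  refine ⟨(funext hq : p = _) ▸ strictConvexOn_quadratic ha, lowerRoot a b c, upperRoot a b c,
    hlow, hhigh, (hroots _).2 (.inl rfl), (hroots _).2 (.inr rfl), fun γ ↦ (hroots γ).1,
    fun γ ↦ nonpos_of_mem_Icc_lowerRoot_upperRoot ha hq hp_one, ?_⟩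
  rw [lowerRoot, discrim_inner_eq, ← inner_neg_right, neg_sub]
end

section
/- For all s, y ∈ ℝⁿ and all M ∈ ℝ, the discriminant of the quadratic p(γ) = γ²(s−y)ᵀ(s−y) + γ(s−y)ᵀ(2y − Ms) + yᵀ(y − Ms) satisfies the identity ((s−y)ᵀ(Ms − 2y))² − 4 (s−y)ᵀ(s−y) · yᵀ(y − Ms) = M²(sᵀ(s−y))² + 4(M−1)(sᵀs · yᵀy − (yᵀs)²). In particular, if M > 1 this discriminant is nonnegative, since sᵀs · yᵀy ≥ (yᵀs)² by the Cauchy–Schwarz inequality. -/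
open RealInnerProductSpace

/-- **Discriminant identity for the quadratic `p`.**
For all `s, y ∈ ℝⁿ` and all `M ∈ ℝ`, the discriminant of
`p(γ) = γ²(s−y)ᵀ(s−y) + γ(s−y)ᵀ(2y − Ms) + yᵀ(y − Ms)` satisfies
`((s−y)ᵀ(Ms − 2y))² − 4(s−y)ᵀ(s−y) · yᵀ(y − Ms)
  = M²(sᵀ(s−y))² + 4(M−1)(sᵀs·yᵀy − (yᵀs)²)`,
and if `M > 1` this quantity is nonnegative (by Cauchy–Schwarz). -/
theorem stmt9 {n : ℕ} (s y : EuclideanSpace ℝ (Fin n)) (M : ℝ) :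
    ⟪s - y, M • s - (2 : ℝ) • y⟫ ^ 2 - 4 * ⟪s - y, s - y⟫ * ⟪y, y - M • s⟫ =
      M ^ 2 * ⟪s, s - y⟫ ^ 2 + 4 * (M - 1) * (⟪s, s⟫ * ⟪y, y⟫ - ⟪y, s⟫ ^ 2) ∧
    (1 < M →
      0 ≤ ⟪s - y, M • s - (2 : ℝ) • y⟫ ^ 2 - 4 * ⟪s - y, s - y⟫ * ⟪y, y - M • s⟫) := by
  have hsy : ⟪s, y⟫ = ⟪y, s⟫ := real_inner_comm y s
  have key : ⟪s - y, M • s - (2 : ℝ) • y⟫ ^ 2 - 4 * ⟪s - y, s - y⟫ * ⟪y, y - M • s⟫ =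
      M ^ 2 * ⟪s, s - y⟫ ^ 2 + 4 * (M - 1) * (⟪s, s⟫ * ⟪y, y⟫ - ⟪y, s⟫ ^ 2) := by
    simp only [inner_sub_left, inner_sub_right, inner_smul_right, hsy]
    ring
  refine ⟨key, fun hM => ?_⟩
  rw [key]
  have hcs : ⟪y, s⟫ ^ 2 ≤ ⟪s, s⟫ * ⟪y, y⟫ := by
    have := real_inner_mul_inner_self_le y s
    simpa [real_inner_self_eq_norm_sq, mul_comm, sq] using this
  have h1 : 0 ≤ M ^ 2 * ⟪s, s - y⟫ ^ 2 := by positivity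
  have h2 : 0 ≤ 4 * (M - 1) * (⟪s, s⟫ * ⟪y, y⟫ - ⟪y, s⟫ ^ 2) := by
    apply mul_nonneg (by linarith) (by linarith)
  linarith
end

section
/- Let E be a real symmetric positive definite n×n matrix, and let s, z ∈ ℝⁿ with s ≠ 0 and zᵀs > 0. Then the modified BFGS update E⁺ = E − (E s sᵀ E)/(sᵀ E s) + (z zᵀ)/(zᵀ s) is symmetric positive definite. Consequently, if g ∈ ℝⁿ is nonzero and d solves E⁺ d = −g, then d is a descent direction: gᵀd < 0. -/
/-!
Completing the square along `s` gives `xᵀ E⁺ x = yᵀ E y + (zᵀx)² / (zᵀs)` with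
`y = x - (xᵀEs / sᵀEs) s`. The first term is positive unless `y = 0`, i.e. unless `x` is a
nonzero multiple of `s`, and then the second one is positive because `zᵀs > 0`.
A solution of `E⁺ d = -g` then satisfies `gᵀd = -dᵀE⁺d < 0`.
-/

open Matrix

namespace Matrix

variable {ι : Type*} [Fintype ι]

noncomputable def bfgsUpdate (E : Matrix ι ι ℝ) (s z : ι → ℝ) : Matrix ι ι ℝ :=
  E - (s ⬝ᵥ E *ᵥ s)⁻¹ • vecMulVec (E *ᵥ s) (s ᵥ* E) + (z ⬝ᵥ s)⁻¹ • vecMulVec z z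

lemma IsHermitian.vecMul_eq_mulVec {E : Matrix ι ι ℝ} (hE : E.IsHermitian) (x : ι → ℝ) :
    x ᵥ* E = E *ᵥ x := by
  rw [← vecMul_transpose, (isHermitian_iff_isSymm.mp hE).eq]

lemma IsHermitian.dotProduct_mulVec_comm {E : Matrix ι ι ℝ} (hE : E.IsHermitian) (x y : ι → ℝ) :
    x ⬝ᵥ E *ᵥ y = y ⬝ᵥ E *ᵥ x := by
  rw [dotProduct_mulVec, hE.vecMul_eq_mulVec, dotProduct_comm]

lemma isHermitian_smul_vecMulVec_self (c : ℝ) (v : ι → ℝ) : (c • vecMulVec v v).IsHermitian := by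
  simpa using (posSemidef_vecMulVec_self_star v).isHermitian.smul (IsSelfAdjoint.all c)

lemma isHermitian_bfgsUpdate {E : Matrix ι ι ℝ} (hE : E.IsHermitian) (s z : ι → ℝ) :
    (bfgsUpdate E s z).IsHermitian := by
  rw [Matrix.bfgsUpdate, hE.vecMul_eq_mulVec]
  exact (hE.sub (isHermitian_smul_vecMulVec_self _ _)).add (isHermitian_smul_vecMulVec_self _ _)

lemma dotProduct_bfgsUpdate_mulVec {E : Matrix ι ι ℝ} (hE : E.IsHermitian)
    (s z x : ι → ℝ) :
    x ⬝ᵥ bfgsUpdate E s z *ᵥ x =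
      x ⬝ᵥ E *ᵥ x - (x ⬝ᵥ E *ᵥ s) ^ 2 / (s ⬝ᵥ E *ᵥ s) + (z ⬝ᵥ x) ^ 2 / (z ⬝ᵥ s) := by
  simp only [Matrix.bfgsUpdate, hE.vecMul_eq_mulVec, add_mulVec, sub_mulVec, smul_mulVec,
    vecMulVec_mulVec, dotProduct_add, dotProduct_sub, dotProduct_smul, op_smul_eq_smul,
    smul_eq_mul]
  rw [dotProduct_comm (E *ᵥ s) x, dotProduct_comm x z]
  ring

lemma IsHermitian.dotProduct_mulVec_sub_sq_div {E : Matrix ι ι ℝ} (hE : E.IsHermitian)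
    (s x : ι → ℝ) :
    x ⬝ᵥ E *ᵥ x - (x ⬝ᵥ E *ᵥ s) ^ 2 / (s ⬝ᵥ E *ᵥ s) =
      (x - (x ⬝ᵥ E *ᵥ s / s ⬝ᵥ E *ᵥ s) • s) ⬝ᵥ E *ᵥ (x - (x ⬝ᵥ E *ᵥ s / s ⬝ᵥ E *ᵥ s) • s) := by
  rcases eq_or_ne (s ⬝ᵥ E *ᵥ s) 0 with hβ | hβ
  · simp [hβ]
  · simp only [mulVec_sub, mulVec_smul, sub_dotProduct, dotProduct_sub, smul_dotProduct,
      dotProduct_smul, smul_eq_mul, hE.dotProduct_mulVec_comm s x]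
    field_simp
    ring

lemma posDef_bfgsUpdate {E : Matrix ι ι ℝ} (hE : E.PosDef) {s z : ι → ℝ}
    (hzs : 0 < z ⬝ᵥ s) : (bfgsUpdate E s z).PosDef := by
  refine .of_dotProduct_mulVec_pos (isHermitian_bfgsUpdate hE.isHermitian s z) fun x hx => ?_
  rw [star_trivial, dotProduct_bfgsUpdate_mulVec hE.isHermitian,
    hE.isHermitian.dotProduct_mulVec_sub_sq_div]
  set c := x ⬝ᵥ E *ᵥ s / s ⬝ᵥ E *ᵥ s
  rcases eq_or_ne (x - c • s) 0 with hy | hy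
  · have hxs : x = c • s := sub_eq_zero.mp hy
    have hc : c ≠ 0 := fun hc => hx (by simpa [hc] using hxs)
    have hzx : z ⬝ᵥ x ≠ 0 := by rw [hxs, dotProduct_smul, smul_eq_mul]; positivity
    rw [hy, zero_dotProduct, zero_add]
    positivity
  · have hyE : 0 < (x - c • s) ⬝ᵥ E *ᵥ (x - c • s) := by
      simpa using hE.dotProduct_mulVec_pos hy
    positivity

lemma PosDef.dotProduct_neg_of_mulVec_eq_neg {A : Matrix ι ι ℝ} (hA : A.PosDef) {g d : ι → ℝ}
    (hg : g ≠ 0) (hd : A *ᵥ d = -g) : g ⬝ᵥ d < 0 := by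
  have hd0 : d ≠ 0 := by
    rintro rfl
    exact hg (neg_eq_zero.mp (by simpa using hd.symm))
  have := hA.dotProduct_mulVec_pos hd0
  rw [star_trivial, hd, dotProduct_neg, dotProduct_comm] at this
  linarith

end Matrix

theorem stmt13_general {n : ℕ} (E : Matrix (Fin n) (Fin n) ℝ) (hE : E.PosDef)
    (s z : Fin n → ℝ) (hzs : 0 < z ⬝ᵥ s)
    (Eplus : Matrix (Fin n) (Fin n) ℝ)
    (hEplus : Eplus =
      E - (s ⬝ᵥ E *ᵥ s)⁻¹ • vecMulVec (E *ᵥ s) (s ᵥ* E) + (z ⬝ᵥ s)⁻¹ • vecMulVec z z) :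
    Eplus.PosDef ∧
    ∀ g d : Fin n → ℝ, g ≠ 0 → Eplus *ᵥ d = -g → g ⬝ᵥ d < 0 := by
  have hpos : (bfgsUpdate E s z).PosDef := posDef_bfgsUpdate hE hzs
  subst hEplus
  exact ⟨hpos, fun _ _ hg hd => hpos.dotProduct_neg_of_mulVec_eq_neg hg hd⟩

/-- **Positive definiteness of the modified BFGS update and descent directions.**
Let `E` be a real symmetric positive definite `n×n` matrix and `s, z ∈ ℝⁿ` with
`s ≠ 0` and `zᵀs > 0`.  Then `E⁺ = E − (E s sᵀ E)/(sᵀ E s) + (z zᵀ)/(zᵀ s)` is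
symmetric positive definite; consequently, if `g ≠ 0` and `E⁺ d = −g`, then
`gᵀd < 0`, i.e. `d` is a descent direction. -/
theorem stmt13 {n : ℕ} (E : Matrix (Fin n) (Fin n) ℝ) (hE : E.PosDef)
    (s z : Fin n → ℝ) (hs : s ≠ 0) (hzs : 0 < z ⬝ᵥ s)
    (Eplus : Matrix (Fin n) (Fin n) ℝ)
    (hEplus : Eplus =
      E - (s ⬝ᵥ E *ᵥ s)⁻¹ • vecMulVec (E *ᵥ s) (s ᵥ* E) + (z ⬝ᵥ s)⁻¹ • vecMulVec z z) :
    Eplus.PosDef ∧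
    ∀ g d : Fin n → ℝ, g ≠ 0 → Eplus *ᵥ d = -g → g ⬝ᵥ d < 0 :=
  stmt13_general E hE s z hzs Eplus hEplus
end
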